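/- arXiv:1209.5118 — 6 statements merged into one kernel-verified Lean document; each statement's English description precedes it below -/
import Mathlib

section
/- Let Ω ⊆ ℝⁿ be open, ψ : Ω → ℝ^{n+1} and τ : Ω → ℝ differentiable, and set φ̄ = (ψ, τ) : Ω → ℝ^{n+2}. Assume that for each x ∈ Ω the bilinear form (X, Y) ↦ η(Dφ̄(x)X, Dφ̄(x)Y) on ℝⁿ is positive definite (φ̄ is a spacelike immersion). Let ν : Ω → ℝ^{n+1} be differentiable with |ν(x)| = 1 and ⟨Dψ(x)X, ν(x)⟩₀ = Dτ(x)X for every X ∈ ℝⁿ (i.e. the null vector field (ν, 1) is normal to φ̄). Set φ := ψ − τν. Then for every x ∈ Ω the linear map X ↦ (Dφ(x)X, Dν(x)X) from ℝⁿ to ℝ^{n+1} × ℝ^{n+1} is injective. -/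
open scoped RealInnerProductSpace BigOperators

noncomputable section

/-- Euclidean space `ℝ^n`. -/
abbrev E (n : ℕ) := EuclideanSpace ℝ (Fin n)

/-- The Minkowski bilinear form on `ℝ^{n+2} = ℝ^{n+1} × ℝ`:
`η((u,s),(v,t)) = ⟨u,v⟩₀ − s·t`. -/
def etaProd (n : ℕ) (u v : E (n + 1) × ℝ) : ℝ := ⟪u.1, v.1⟫ - u.2 * v.2

/-- Let `φ̄ = (ψ, τ)` be a spacelike immersion of an open set `Ω ⊆ ℝⁿ` into Minkowski space
`ℝ^{n+2}_1 = ℝ^{n+1} × ℝ`, and let `ν` be a unit field with `⟨Dψ X, ν⟩₀ = Dτ X`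
(i.e. the null field `(ν, 1)` is normal to `φ̄`). Then, with `φ := ψ − τν`, the map
`X ↦ (Dφ(x)X, Dν(x)X)` is injective for every `x ∈ Ω`. -/
theorem statement2 (n : ℕ) (Ω : Set (E n)) (hΩ : IsOpen Ω)
    (ψ : E n → E (n + 1)) (τ : E n → ℝ) (ν : E n → E (n + 1))
    (hψ : ∀ x ∈ Ω, DifferentiableAt ℝ ψ x)
    (hτ : ∀ x ∈ Ω, DifferentiableAt ℝ τ x)
    (hν : ∀ x ∈ Ω, DifferentiableAt ℝ ν x)
    (hspace : ∀ x ∈ Ω, ∀ X : E n, X ≠ 0 →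
      0 < etaProd n (fderiv ℝ (fun y => (ψ y, τ y)) x X)
            (fderiv ℝ (fun y => (ψ y, τ y)) x X))
    (hνunit : ∀ x ∈ Ω, ‖ν x‖ = 1)
    (hnormal : ∀ x ∈ Ω, ∀ X : E n, ⟪fderiv ℝ ψ x X, ν x⟫ = fderiv ℝ τ x X) :
    ∀ x ∈ Ω, Function.Injective (fun X : E n =>
      (fderiv ℝ (fun y => ψ y - τ y • ν y) x X, fderiv ℝ ν x X)) := by
  intro x hx X₁ X₂ h
  simp only [Prod.mk.injEq] at h
  by_contra hne
  have hXne : X₁ - X₂ ≠ 0 := sub_ne_zero.mpr hne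
  set X := X₁ - X₂ with hX
  have hνX : fderiv ℝ ν x X = 0 := by
    simp only [hX, map_sub, h.2, sub_self]
  have hφ : HasFDerivAt (fun y => ψ y - τ y • ν y)
      ((fderiv ℝ ψ x) - (τ x • fderiv ℝ ν x + (fderiv ℝ τ x).smulRight (ν x))) x :=
    (hψ x hx).hasFDerivAt.sub ((hτ x hx).hasFDerivAt.smul (hν x hx).hasFDerivAt)
  have hφX : fderiv ℝ (fun y => ψ y - τ y • ν y) x X = 0 := by
    simp only [hX, map_sub, h.1, sub_self]
  rw [hφ.fderiv] at hφX
  simp only [ContinuousLinearMap.sub_apply, ContinuousLinearMap.add_apply,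
    ContinuousLinearMap.smul_apply, ContinuousLinearMap.smulRight_apply, hνX,
    smul_zero, zero_add, sub_eq_zero] at hφX
  -- hφX : fderiv ℝ ψ x X = (fderiv ℝ τ x X) • ν x
  have hpair : HasFDerivAt (fun y => (ψ y, τ y))
      ((fderiv ℝ ψ x).prod (fderiv ℝ τ x)) x :=
    HasFDerivAt.prodMk (hψ x hx).hasFDerivAt (hτ x hx).hasFDerivAt
  have hsp := hspace x hx X hXne
  rw [hpair.fderiv] at hsp
  simp only [etaProd, ContinuousLinearMap.prod_apply, hφX] at hsp
  rw [real_inner_smul_left, real_inner_smul_right,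
    real_inner_self_eq_norm_sq, hνunit x hx] at hsp
  nlinarith [hsp]
end
end

section
/- Let Ω ⊆ ℝⁿ be open, and let φ : Ω → ℝ^{n+1}, τ : Ω → ℝ, ν : Ω → ℝ^{n+1} be C² with |ν(x)| = 1, ⟨Dφ(x)X, ν(x)⟩₀ = 0 for all X, and Dφ(x) injective for each x. Fix x ∈ Ω and let A : ℝⁿ → ℝⁿ be the linear map with Dν(x)X = −Dφ(x)(A X). Define ψ := φ + τν, φ̄ := (ψ, τ) : Ω → ℝ^{n+2}, ν̄ := (ν, 1), and g(X, Y) := ⟨Dφ(x)X, Dφ(x)Y⟩₀. Then the second fundamental form of φ̄ with respect to ν̄, given by h̄_ν̄(X, Y) = −η(Dφ̄(x)X, (Dν(x)Y, 0)), satisfies h̄_ν̄(X, Y) = g(X, AY) − τ(x) g(AX, AY) for all X, Y ∈ ℝⁿ. -/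
open scoped RealInnerProductSpace BigOperators

noncomputable section

/-- Let `φ, τ, ν` be `C²` on an open `Ω ⊆ ℝⁿ`, with `ν` unit, `⟨Dφ X, ν⟩₀ = 0`, and `Dφ`
injective. Fix `x ∈ Ω` and let `A` be the shape operator, `Dν(x)X = −Dφ(x)(AX)`. Set
`ψ := φ + τν`, `φ̄ := (ψ, τ)`, `ν̄ := (ν, 1)`, and `g(X,Y) := ⟨Dφ(x)X, Dφ(x)Y⟩₀`. Then the
scalar second fundamental form `h̄_ν̄(X,Y) = −η(Dφ̄(x)X, (Dν(x)Y, 0))` equals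
`g(X, AY) − τ(x) g(AX, AY)`. -/
theorem statement6 (n : ℕ) (Ω : Set (E n)) (hΩ : IsOpen Ω)
    (φ : E n → E (n + 1)) (τ : E n → ℝ) (ν : E n → E (n + 1))
    (hφ : ContDiffOn ℝ 2 φ Ω) (hτ : ContDiffOn ℝ 2 τ Ω) (hν : ContDiffOn ℝ 2 ν Ω)
    (hνunit : ∀ y ∈ Ω, ‖ν y‖ = 1)
    (horth : ∀ y ∈ Ω, ∀ X : E n, ⟪fderiv ℝ φ y X, ν y⟫ = 0)
    (himm : ∀ y ∈ Ω, Function.Injective (fderiv ℝ φ y))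
    (x : E n) (hx : x ∈ Ω)
    (A : E n →ₗ[ℝ] E n)
    (hA : ∀ X : E n, fderiv ℝ ν x X = - fderiv ℝ φ x (A X))
    (g : E n → E n → ℝ)
    (hg : ∀ X Y : E n, g X Y = ⟪fderiv ℝ φ x X, fderiv ℝ φ x Y⟫) :
    ∀ X Y : E n,
      - etaProd n (fderiv ℝ (fun y => (φ y + τ y • ν y, τ y)) x X)
          (fderiv ℝ ν x Y, (0 : ℝ))
      = g X (A Y) - τ x * g (A X) (A Y) := by
  intro X Y
  have hx' : Ω ∈ nhds x := hΩ.mem_nhds hx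
  have hφd : DifferentiableAt ℝ φ x :=
    (hφ.differentiableOn (by norm_num)).differentiableAt hx'
  have hτd : DifferentiableAt ℝ τ x :=
    (hτ.differentiableOn (by norm_num)).differentiableAt hx'
  have hνd : DifferentiableAt ℝ ν x :=
    (hν.differentiableOn (by norm_num)).differentiableAt hx'
  have h1 : HasFDerivAt (fun y => (φ y + τ y • ν y, τ y))
      (((fderiv ℝ φ x) + (τ x • fderiv ℝ ν x +
        (fderiv ℝ τ x).smulRight (ν x))).prod (fderiv ℝ τ x)) x :=
    HasFDerivAt.prodMk (hφd.hasFDerivAt.add (hτd.hasFDerivAt.smul hνd.hasFDerivAt)) hτd.hasFDerivAt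
  rw [h1.fderiv]
  have h0 : ⟪ν x, fderiv ℝ φ x (A Y)⟫ = 0 := by
    rw [real_inner_comm]; exact horth x hx (A Y)
  simp only [etaProd, ContinuousLinearMap.prod_apply, ContinuousLinearMap.add_apply,
    ContinuousLinearMap.coe_smul', Pi.smul_apply, ContinuousLinearMap.smulRight_apply,
    hA, hg, inner_add_left, inner_neg_left, inner_neg_right, inner_neg_neg,
    inner_smul_left, inner_smul_right, real_inner_smul_left, h0, conj_trivial]
  ring
end
end

section
/- Let r₁ < r₂ < ⋯ < r_p be real numbers (p ≥ 2) and m₁, …, m_p positive reals. Define P(τ) := Σ_{i=1}^p m_i ∏_{j ≠ i} (r_j − τ). Then P is a polynomial of degree p − 1 that has exactly p − 1 distinct real roots τ₁, …, τ_{p−1}, and they interlace: r_i < τ_i < r_{i+1} for each i = 1, …, p − 1. -/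
open scoped BigOperators
open Polynomial

private lemma ivt_zero8 {f : ℝ → ℝ} (hf : Continuous f) {a b : ℝ} (hab : a < b)
    (h : f a * f b < 0) : ∃ x ∈ Set.Ioo a b, f x = 0 := by
  rcases lt_trichotomy (f a) 0 with ha | ha | ha
  · have hb : 0 < f b := by nlinarith
    obtain ⟨x, hx, hfx⟩ :=
      intermediate_value_Ioo hab.le hf.continuousOn (Set.mem_Ioo.2 ⟨ha, hb⟩)
    exact ⟨x, hx, hfx⟩
  · simp [ha] at h
  · have hb : f b < 0 := by nlinarith
    obtain ⟨x, hx, hfx⟩ :=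
      intermediate_value_Ioo' hab.le hf.continuousOn (Set.mem_Ioo.2 ⟨hb, ha⟩)
    exact ⟨x, hx, hfx⟩

private lemma sign_prod8 {p : ℕ} (r : Fin p → ℝ) (hr : StrictMono r) (k : Fin p) :
    0 < (-1 : ℝ) ^ (k : ℕ) * ∏ j ∈ Finset.univ.erase k, (r j - r k) := by
  have hsplit : Finset.univ.erase k = Finset.Iio k ∪ Finset.Ioi k := by
    ext j
    simp [Finset.mem_erase, Finset.mem_Iio, Finset.mem_Ioi, lt_or_lt_iff_ne, ne_comm]
  have hdisj : Disjoint (Finset.Iio k) (Finset.Ioi k) := by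
    simp [Finset.disjoint_left]
    intro a ha; exact le_of_lt ha
  rw [hsplit, Finset.prod_union hdisj]
  have h1 : ∏ j ∈ Finset.Iio k, (r j - r k)
      = (-1 : ℝ) ^ (k : ℕ) * ∏ j ∈ Finset.Iio k, (r k - r j) := by
    rw [← Fin.card_Iio k, ← Finset.prod_const, ← Finset.prod_mul_distrib]
    exact Finset.prod_congr rfl fun j hj => by ring
  rw [h1]
  have h2 : 0 < ∏ j ∈ Finset.Iio k, (r k - r j) :=
    Finset.prod_pos fun j hj => sub_pos.2 (hr (Finset.mem_Iio.1 hj))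
  have h3 : 0 < ∏ j ∈ Finset.Ioi k, (r j - r k) :=
    Finset.prod_pos fun j hj => sub_pos.2 (hr (Finset.mem_Ioi.1 hj))
  have h4 : ((-1 : ℝ) ^ (k : ℕ)) * ((-1 : ℝ) ^ (k : ℕ)) = 1 := by
    rw [← pow_add]; exact Even.neg_one_pow ⟨k, rfl⟩
  calc (0:ℝ) < (∏ j ∈ Finset.Iio k, (r k - r j)) * ∏ j ∈ Finset.Ioi k, (r j - r k) :=
        mul_pos h2 h3
    _ = (-1:ℝ)^(k:ℕ) * ((-1:ℝ)^(k:ℕ) * (∏ j ∈ Finset.Iio k, (r k - r j)) *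
          ∏ j ∈ Finset.Ioi k, (r j - r k)) := by
        rw [← mul_assoc, ← mul_assoc, h4, one_mul]

/-- For `r₁ < ⋯ < r_p` (`p ≥ 2`) and positive weights `m_i`, the polynomial
`P(τ) = Σ m_i ∏_{j≠i} (r_j − τ)` has degree `p − 1` and exactly `p − 1` distinct real roots
`τ₁ < ⋯ < τ_{p−1}`, which interlace: `r_i < τ_i < r_{i+1}`. -/
theorem statement8 (p : ℕ) (hp : 2 ≤ p) (r m : Fin p → ℝ)
    (hr : StrictMono r) (hm : ∀ i, 0 < m i)
    (P : Polynomial ℝ)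
    (hP : P = ∑ i : Fin p, Polynomial.C (m i) *
        ∏ j ∈ Finset.univ.erase i, (Polynomial.C (r j) - Polynomial.X)) :
    P.degree = (p - 1 : ℕ) ∧
    ∃ τ : Fin (p - 1) → ℝ, StrictMono τ ∧
      (∀ i : Fin (p - 1), P.eval (τ i) = 0) ∧
      (∀ i : Fin (p - 1),
        r ⟨(i : ℕ), by have := i.isLt; omega⟩ < τ i ∧
        τ i < r ⟨(i : ℕ) + 1, by have := i.isLt; omega⟩) ∧
      (∀ t : ℝ, P.eval t = 0 → ∃ i : Fin (p - 1), t = τ i) := by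
  -- evaluation at the r k
  have heval : ∀ k : Fin p,
      P.eval (r k) = m k * ∏ j ∈ Finset.univ.erase k, (r j - r k) := by
    intro k
    rw [hP]
    simp only [eval_finset_sum, eval_mul, eval_C, eval_prod, eval_sub, eval_X]
    rw [Finset.sum_eq_single k]
    · intro b _ hb
      have hk : k ∈ Finset.univ.erase b := Finset.mem_erase.2 ⟨Ne.symm hb, Finset.mem_univ k⟩
      rw [Finset.prod_eq_zero hk (by ring), mul_zero]
    · intro h; exact absurd (Finset.mem_univ k) h
  -- sign of P at the r k
  have hsign : ∀ k : Fin p, 0 < (-1 : ℝ) ^ (k : ℕ) * P.eval (r k) := by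
    intro k
    rw [heval k]
    calc (0:ℝ) < m k * ((-1:ℝ)^(k:ℕ) * ∏ j ∈ Finset.univ.erase k, (r j - r k)) :=
          mul_pos (hm k) (sign_prod8 r hr k)
      _ = (-1:ℝ)^(k:ℕ) * (m k * ∏ j ∈ Finset.univ.erase k, (r j - r k)) := by ring
  have hPne : P ≠ 0 := by
    intro h
    have := hsign ⟨0, by omega⟩
    simp [h] at this
  -- degree upper bound
  have hdegle : P.degree ≤ (p - 1 : ℕ) := by
    rw [hP]
    refine (Polynomial.degree_sum_le _ _).trans ?_
    refine Finset.sup_le fun i _ => ?_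
    refine (Polynomial.degree_mul_le _ _).trans ?_
    have h1 : Polynomial.degree (∏ j ∈ Finset.univ.erase i, (Polynomial.C (r j) - Polynomial.X))
        ≤ (p - 1 : ℕ) := by
      refine (Polynomial.degree_prod_le _ _).trans ?_
      have hd1 : ∀ j : Fin p, (Polynomial.C (r j) - Polynomial.X).degree ≤ 1 := by
        intro j
        have : (Polynomial.C (r j) - Polynomial.X) = -(Polynomial.X - Polynomial.C (r j)) := by
          ring
        rw [this, Polynomial.degree_neg, Polynomial.degree_X_sub_C]
      refine (Finset.sum_le_sum fun j _ => hd1 j).trans ?_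
      rw [Finset.sum_const, Finset.card_erase_of_mem (Finset.mem_univ i), Finset.card_univ,
        Fintype.card_fin]
      simp [Nat.cast_le]
    calc ((Polynomial.C (m i)).degree + _) ≤ 0 + ((p-1:ℕ) : WithBot ℕ) :=
          add_le_add Polynomial.degree_C_le h1
      _ = ((p-1:ℕ) : WithBot ℕ) := zero_add _
  -- construct the roots by IVT
  have hivt : ∀ i : Fin (p - 1), ∃ x ∈ Set.Ioo (r ⟨(i : ℕ), by have := i.isLt; omega⟩)
      (r ⟨(i : ℕ) + 1, by have := i.isLt; omega⟩), P.eval x = 0 := by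
    intro i
    set a : Fin p := ⟨(i : ℕ), by have := i.isLt; omega⟩
    set b : Fin p := ⟨(i : ℕ) + 1, by have := i.isLt; omega⟩
    have hab : r a < r b := hr (by simp [a, b, Fin.lt_def])
    have h1 := hsign a
    have h2 := hsign b
    have hb' : (b : ℕ) = (i : ℕ) + 1 := rfl
    have ha' : (a : ℕ) = (i : ℕ) := rfl
    rw [ha'] at h1; rw [hb'] at h2
    have h4 : ((-1 : ℝ) ^ (i : ℕ)) * ((-1 : ℝ) ^ ((i : ℕ) + 1)) = -1 := by
      rw [← pow_add]
      exact Odd.neg_one_pow ⟨(i : ℕ), by ring⟩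
    have hprod : P.eval (r a) * P.eval (r b) < 0 := by
      have hmul := mul_pos h1 h2
      have key : ((-1:ℝ)^(i:ℕ) * P.eval (r a)) * ((-1:ℝ)^((i:ℕ)+1) * P.eval (r b))
          = -(P.eval (r a) * P.eval (r b)) := by
        calc ((-1:ℝ)^(i:ℕ) * P.eval (r a)) * ((-1:ℝ)^((i:ℕ)+1) * P.eval (r b))
            = ((-1:ℝ)^(i:ℕ) * (-1:ℝ)^((i:ℕ)+1)) * (P.eval (r a) * P.eval (r b)) := by ring
          _ = -(P.eval (r a) * P.eval (r b)) := by rw [h4]; ring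
      rw [key] at hmul
      linarith
    exact ivt_zero8 P.continuous hab hprod
  choose τ hτmem hτroot using hivt
  have hτint : ∀ i : Fin (p - 1),
      r ⟨(i : ℕ), by have := i.isLt; omega⟩ < τ i ∧
      τ i < r ⟨(i : ℕ) + 1, by have := i.isLt; omega⟩ := fun i => hτmem i
  have hτmono : StrictMono τ := by
    intro i j hij
    have h1 : τ i < r ⟨(i : ℕ) + 1, by have := i.isLt; omega⟩ := (hτint i).2
    have h2 : r ⟨(j : ℕ), by have := j.isLt; omega⟩ < τ j := (hτint j).1
    have h3 : r ⟨(i : ℕ) + 1, by have := i.isLt; omega⟩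
        ≤ r ⟨(j : ℕ), by have := j.isLt; omega⟩ := by
      apply hr.monotone
      simp only [Fin.mk_le_mk]
      exact Fin.lt_def.1 hij
    linarith
  -- roots count
  set S : Finset ℝ := Finset.image τ Finset.univ with hS
  have hScard : S.card = p - 1 := by
    rw [hS, Finset.card_image_of_injective _ hτmono.injective, Finset.card_univ,
      Fintype.card_fin]
  have hSsub : S ⊆ P.roots.toFinset := by
    intro x hx
    obtain ⟨i, _, rfl⟩ := Finset.mem_image.1 hx
    rw [Multiset.mem_toFinset, Polynomial.mem_roots hPne]
    exact hτroot i
  have hcard1 : P.roots.toFinset.card ≤ P.roots.card := Multiset.toFinset_card_le _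
  have hcard2 : P.roots.card ≤ P.natDegree := Polynomial.card_roots' P
  have hndle : P.natDegree ≤ p - 1 := Polynomial.natDegree_le_iff_degree_le.2 hdegle
  have hndge : p - 1 ≤ P.natDegree := by
    calc p - 1 = S.card := hScard.symm
      _ ≤ P.roots.toFinset.card := Finset.card_le_card hSsub
      _ ≤ P.roots.card := hcard1
      _ ≤ P.natDegree := hcard2
  have hnd : P.natDegree = p - 1 := le_antisymm hndle hndge
  have hdeg : P.degree = (p - 1 : ℕ) := by
    rw [Polynomial.degree_eq_natDegree hPne, hnd]
  refine ⟨hdeg, τ, hτmono, hτroot, hτint, ?_⟩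
  intro t ht
  have htS : t ∈ S := by
    have hle : P.roots.toFinset.card ≤ S.card := by
      calc P.roots.toFinset.card ≤ P.roots.card := hcard1
        _ ≤ P.natDegree := hcard2
        _ = p - 1 := hnd
        _ = S.card := hScard.symm
    have hsub2 : P.roots.toFinset ⊆ S :=
      (Finset.eq_of_subset_of_card_le hSsub hle).symm ▸ Finset.Subset.refl _
    apply hsub2
    rw [Multiset.mem_toFinset, Polynomial.mem_roots hPne]
    exact ht
  obtain ⟨i, _, hi⟩ := Finset.mem_image.1 htS
  exact ⟨i, hi.symm⟩
end

section
/- Let Ω ⊆ ℝⁿ be open, ψ : Ω → ℝ^{n+2} and τ : Ω → ℝ differentiable with |ψ(x)| = 1, and let ν : Ω → ℝ^{n+2} be differentiable with |ν(x)| = 1, ⟨ψ(x), ν(x)⟩₀ = 0, and ⟨Dψ(x)X, ν(x)⟩₀ = Dτ(x)X for all X. Define φ := cos(τ)ψ − sin(τ)ν and ν_φ := sin(τ)ψ + cos(τ)ν. Then ⟨Dφ(x)X, ν_φ(x)⟩₀ = 0 for every x ∈ Ω and X ∈ ℝⁿ. -/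
open scoped RealInnerProductSpace BigOperators

noncomputable section

/-- Let `ψ : Ω → ℝ^{n+2}` with `|ψ| = 1`, `τ : Ω → ℝ`, and `ν` with `|ν| = 1`, `⟨ψ,ν⟩₀ = 0`
and `⟨Dψ(x)X, ν(x)⟩₀ = Dτ(x)X` (so `(ν,1)` is normal to `φ̄ = (ψ,τ)` in `S^{n+1} × ℝ`). With
`φ := cos(τ)ψ − sin(τ)ν` and `ν_φ := sin(τ)ψ + cos(τ)ν`, one has `⟨Dφ(x)X, ν_φ(x)⟩₀ = 0` for
every `x ∈ Ω` and `X ∈ ℝⁿ`. -/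
theorem statement14 (n : ℕ) (Ω : Set (E n)) (hΩ : IsOpen Ω)
    (ψ : E n → E (n + 2)) (τ : E n → ℝ) (ν : E n → E (n + 2))
    (hψ : ∀ x ∈ Ω, DifferentiableAt ℝ ψ x)
    (hτ : ∀ x ∈ Ω, DifferentiableAt ℝ τ x)
    (hν : ∀ x ∈ Ω, DifferentiableAt ℝ ν x)
    (hψunit : ∀ x ∈ Ω, ‖ψ x‖ = 1)
    (hνunit : ∀ x ∈ Ω, ‖ν x‖ = 1)
    (hψν : ∀ x ∈ Ω, ⟪ψ x, ν x⟫ = 0)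
    (hnormal : ∀ x ∈ Ω, ∀ X : E n, ⟪fderiv ℝ ψ x X, ν x⟫ = fderiv ℝ τ x X) :
    ∀ x ∈ Ω, ∀ X : E n,
      ⟪fderiv ℝ (fun y => Real.cos (τ y) • ψ y - Real.sin (τ y) • ν y) x X,
        Real.sin (τ x) • ψ x + Real.cos (τ x) • ν x⟫ = 0 := by
  intro x hx X
  have hmem : Ω ∈ nhds x := hΩ.mem_nhds hx
  have hψx := hψ x hx
  have hτx := hτ x hx
  have hνx := hν x hx
  -- ⟪Dψ X, ψ⟫ = 0
  have hψψ : ⟪fderiv ℝ ψ x X, ψ x⟫ = 0 := by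
    have hconst : (fun y => ⟪ψ y, ψ y⟫) =ᶠ[nhds x] fun _ => (1 : ℝ) := by
      filter_upwards [hmem] with y hy
      rw [real_inner_self_eq_norm_sq, hψunit y hy]; norm_num
    have h0 : fderiv ℝ (fun y => ⟪ψ y, ψ y⟫) x = 0 := by
      rw [hconst.fderiv_eq]; exact fderiv_const_apply 1
    have h1 := fderiv_inner_apply (𝕜 := ℝ) hψx hψx X
    rw [h0] at h1
    simp only [ContinuousLinearMap.zero_apply] at h1
    have hc := real_inner_comm (fderiv ℝ ψ x X) (ψ x)
    linarith
  -- ⟪Dν X, ν⟫ = 0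
  have hνν : ⟪fderiv ℝ ν x X, ν x⟫ = 0 := by
    have hconst : (fun y => ⟪ν y, ν y⟫) =ᶠ[nhds x] fun _ => (1 : ℝ) := by
      filter_upwards [hmem] with y hy
      rw [real_inner_self_eq_norm_sq, hνunit y hy]; norm_num
    have h0 : fderiv ℝ (fun y => ⟪ν y, ν y⟫) x = 0 := by
      rw [hconst.fderiv_eq]; exact fderiv_const_apply 1
    have h1 := fderiv_inner_apply (𝕜 := ℝ) hνx hνx X
    rw [h0] at h1
    simp only [ContinuousLinearMap.zero_apply] at h1
    have hc := real_inner_comm (fderiv ℝ ν x X) (ν x)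
    linarith
  -- ⟪Dν X, ψ⟫ = - Dτ X
  have hνψ : ⟪fderiv ℝ ν x X, ψ x⟫ = -(fderiv ℝ τ x X) := by
    have hconst : (fun y => ⟪ψ y, ν y⟫) =ᶠ[nhds x] fun _ => (0 : ℝ) := by
      filter_upwards [hmem] with y hy
      exact hψν y hy
    have h0 : fderiv ℝ (fun y => ⟪ψ y, ν y⟫) x = 0 := by
      rw [hconst.fderiv_eq]; exact fderiv_const_apply 0
    have h1 := fderiv_inner_apply (𝕜 := ℝ) hψx hνx X
    rw [h0] at h1
    simp only [ContinuousLinearMap.zero_apply] at h1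
    have h2 := hnormal x hx X
    have hc := real_inner_comm (fderiv ℝ ν x X) (ψ x)
    linarith
  -- derivative of the map
  have hcos : HasFDerivAt (fun y => Real.cos (τ y))
      ((-Real.sin (τ x)) • fderiv ℝ τ x) x :=
    (Real.hasDerivAt_cos (τ x)).comp_hasFDerivAt x hτx.hasFDerivAt
  have hsin : HasFDerivAt (fun y => Real.sin (τ y))
      (Real.cos (τ x) • fderiv ℝ τ x) x :=
    (Real.hasDerivAt_sin (τ x)).comp_hasFDerivAt x hτx.hasFDerivAt
  have hD : HasFDerivAt (fun y => Real.cos (τ y) • ψ y - Real.sin (τ y) • ν y)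
      ((Real.cos (τ x) • fderiv ℝ ψ x +
          ((-Real.sin (τ x)) • fderiv ℝ τ x).smulRight (ψ x)) -
        (Real.sin (τ x) • fderiv ℝ ν x +
          (Real.cos (τ x) • fderiv ℝ τ x).smulRight (ν x))) x :=
    (hcos.smul hψx.hasFDerivAt).sub (hsin.smul hνx.hasFDerivAt)
  rw [hD.fderiv]
  have hψν' := hψν x hx
  have hνψ' : ⟪ν x, ψ x⟫ = 0 := by rw [real_inner_comm]; exact hψν'
  have hψψ' : ⟪ψ x, ψ x⟫ = 1 := by
    rw [real_inner_self_eq_norm_sq, hψunit x hx]; norm_num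
  have hνν' : ⟪ν x, ν x⟫ = 1 := by
    rw [real_inner_self_eq_norm_sq, hνunit x hx]; norm_num
  have hn := hnormal x hx X
  simp only [ContinuousLinearMap.sub_apply, ContinuousLinearMap.add_apply,
    ContinuousLinearMap.coe_smul', Pi.smul_apply, ContinuousLinearMap.smulRight_apply,
    smul_eq_mul, inner_sub_left, inner_add_left, inner_add_right,
    real_inner_smul_left, real_inner_smul_right, hψψ, hνν, hνψ, hn,
    hψν', hνψ', hψψ', hνν']
  ring
end
end

section
/- Let κ₁ < κ₂ < ⋯ < κ_p be real numbers (p ≥ 1) and m₁, …, m_p positive reals. Define P(s) := Σ_{i=1}^p m_i (κ_i s + 1) ∏_{j ≠ i} (s − κ_j). Then: (a) P has p − 1 distinct real roots s₁, …, s_{p−1} with κ_i < s_i < κ_{i+1}; (b) if Σ_{i=1}^p m_i κ_i = 0 then P has degree p − 1 and exactly p − 1 distinct real roots; (c) if Σ_{i=1}^p m_i κ_i ≠ 0 then P has degree p and exactly p distinct real roots, the additional root lying in (−∞, κ₁) ∪ (κ_p, +∞). -/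
open scoped BigOperators
open Polynomial

private lemma aux_prod_neg {α : Type*} (s : Finset α) (f : α → ℝ)
    (h : ∀ x ∈ s, f x < 0) : 0 < (-1 : ℝ) ^ s.card * ∏ x ∈ s, f x := by
  have h1 : ∏ x ∈ s, f x = (-1 : ℝ) ^ s.card * ∏ x ∈ s, (-f x) := by
    rw [← Finset.prod_const, ← Finset.prod_mul_distrib]
    simp
  have h2 : (0:ℝ) < ∏ x ∈ s, (-f x) := Finset.prod_pos fun x hx => neg_pos.mpr (h x hx)
  rw [h1, ← mul_assoc, ← pow_add]
  rw [Even.neg_one_pow (Even.add_self _), one_mul]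
  exact h2

private lemma aux_root_right (Q : Polynomial ℝ) (hd : 0 < Q.degree) (x : ℝ)
    (hx : Q.eval x * Q.leadingCoeff < 0) : ∃ y, x < y ∧ Q.eval y = 0 := by
  have hcont : Continuous fun t : ℝ => Q.eval t := Q.continuous
  rcases lt_trichotomy Q.leadingCoeff 0 with hl | hl | hl
  · have hx' : 0 < Q.eval x := by nlinarith
    have ht := Q.tendsto_atBot_of_leadingCoeff_nonpos hd hl.le
    obtain ⟨b, hb⟩ := ((ht.eventually (Filter.eventually_lt_atBot (0:ℝ))).and
      (Filter.eventually_gt_atTop x)).exists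
    have h0 : (0:ℝ) ∈ Set.Ioo (Q.eval b) (Q.eval x) := ⟨hb.1, hx'⟩
    obtain ⟨y, hy, hy0⟩ := intermediate_value_Ioo' hb.2.le (hcont.continuousOn) h0
    exact ⟨y, hy.1, hy0⟩
  · rw [hl, mul_zero] at hx; exact absurd hx (lt_irrefl 0)
  · have hx' : Q.eval x < 0 := by nlinarith
    have ht := Q.tendsto_atTop_of_leadingCoeff_nonneg hd hl.le
    obtain ⟨b, hb⟩ := ((ht.eventually (Filter.eventually_gt_atTop (0:ℝ))).and
      (Filter.eventually_gt_atTop x)).exists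
    have h0 : (0:ℝ) ∈ Set.Ioo (Q.eval x) (Q.eval b) := ⟨hx', hb.1⟩
    obtain ⟨y, hy, hy0⟩ := intermediate_value_Ioo hb.2.le (hcont.continuousOn) h0
    exact ⟨y, hy.1, hy0⟩

/-- For `κ₁ < ⋯ < κ_p` (`p ≥ 1`) and positive weights `m_i`, the polynomial
`P(s) = Σ m_i (κ_i s + 1) ∏_{j≠i} (s − κ_j)` has (a) `p − 1` distinct real roots interlacing
the `κ_i`; (b) if `Σ m_i κ_i = 0`, degree `p − 1` and exactly `p − 1` distinct real roots;
(c) if `Σ m_i κ_i ≠ 0`, degree `p` and exactly `p` distinct real roots, one of them lying in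
`(−∞, κ₁) ∪ (κ_p, +∞)`. -/
theorem statement17 (p : ℕ) (hp : 1 ≤ p) (κ m : Fin p → ℝ)
    (hκ : StrictMono κ) (hm : ∀ i, 0 < m i)
    (P : Polynomial ℝ)
    (hP : P = ∑ i : Fin p, Polynomial.C (m i) * (Polynomial.C (κ i) * Polynomial.X + 1) *
        ∏ j ∈ Finset.univ.erase i, (Polynomial.X - Polynomial.C (κ j))) :
    (∃ s : Fin (p - 1) → ℝ, StrictMono s ∧
      ∀ i : Fin (p - 1),
        P.eval (s i) = 0 ∧
        κ ⟨(i : ℕ), by have := i.isLt; omega⟩ < s i ∧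
        s i < κ ⟨(i : ℕ) + 1, by have := i.isLt; omega⟩) ∧
    ((∑ i, m i * κ i) = 0 →
      P.degree = (p - 1 : ℕ) ∧ Set.ncard {s : ℝ | P.eval s = 0} = p - 1) ∧
    ((∑ i, m i * κ i) ≠ 0 →
      P.degree = (p : ℕ) ∧ Set.ncard {s : ℝ | P.eval s = 0} = p ∧
      ∃ s : ℝ, P.eval s = 0 ∧ (s < κ ⟨0, by omega⟩ ∨ κ ⟨p - 1, by omega⟩ < s)) := by
  set Q : Fin p → ℝ[X] := fun i => ∏ j ∈ Finset.univ.erase i, (X - C (κ j)) with hQ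
  have hcard : ∀ i : Fin p, (Finset.univ.erase i).card = p - 1 := by
    intro i; rw [Finset.card_erase_of_mem (Finset.mem_univ i)]; simp
  have hQmonic : ∀ i, (Q i).Monic := fun i =>
    monic_prod_of_monic _ _ fun j _ => monic_X_sub_C _
  have hQdeg : ∀ i, (Q i).natDegree = p - 1 := by
    intro i
    rw [hQ]
    rw [natDegree_prod_of_monic _ _ fun j _ => monic_X_sub_C _]
    simp [hcard i]
  have hQtop : ∀ i, (Q i).coeff (p - 1) = 1 := by
    intro i; have := (hQmonic i).coeff_natDegree; rwa [hQdeg i] at this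
  have hQp : ∀ i, (Q i).coeff p = 0 := fun i =>
    coeff_eq_zero_of_natDegree_lt (by rw [hQdeg i]; omega)
  have hXQ : ∀ i, (X * Q i).coeff (p - 1) = -(∑ j ∈ Finset.univ.erase i, κ j) := by
    intro i
    rcases Nat.lt_or_ge p 2 with h2 | h2
    · have hp1 : p = 1 := by omega
      subst hp1
      have he : (Finset.univ.erase i) = (∅ : Finset (Fin 1)) := by
        ext j; simp [Subsingleton.elim j i]
      simp only [hQ]
      rw [he]
      simp
    · have h1 : p - 1 = (p - 2) + 1 := by omega
      have hc2 : p - 2 = (Finset.univ.erase i).card - 1 := by rw [hcard i]; omega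
      rw [h1, coeff_X_mul]
      simp only [hQ]
      rw [hc2]
      exact prod_X_sub_C_coeff_card_pred _ _ (by rw [hcard i]; omega)
  have hTcoeffp : ∀ i : Fin p,
      (C (m i) * (C (κ i) * X + 1) * Q i).coeff p = m i * κ i := by
    intro i
    have hexp : C (m i) * (C (κ i) * X + 1) * Q i
        = C (m i) * (C (κ i) * (X * Q i)) + C (m i) * Q i := by ring
    rw [hexp, coeff_add, coeff_C_mul, coeff_C_mul, coeff_C_mul, hQp i]
    have : (X * Q i).coeff p = 1 := by
      rw [show p = (p-1)+1 by omega, coeff_X_mul, hQtop i]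
    rw [this]; ring
  have hTcoeffp1 : ∀ i : Fin p,
      (C (m i) * (C (κ i) * X + 1) * Q i).coeff (p-1)
        = m i * (κ i * (-(∑ j ∈ Finset.univ.erase i, κ j)) + 1) := by
    intro i
    have hexp : C (m i) * (C (κ i) * X + 1) * Q i
        = C (m i) * (C (κ i) * (X * Q i)) + C (m i) * Q i := by ring
    rw [hexp, coeff_add, coeff_C_mul, coeff_C_mul, coeff_C_mul, hQtop i, hXQ i]
    ring
  have hPcoeffp : P.coeff p = ∑ i, m i * κ i := by
    rw [hP, finset_sum_coeff]
    exact Finset.sum_congr rfl fun i _ => hTcoeffp i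
  have hPcoeffp1 : P.coeff (p-1)
      = (∑ i, m i * (1 + κ i * κ i)) - (∑ i, m i * κ i) * (∑ j, κ j) := by
    rw [hP, finset_sum_coeff]
    rw [Finset.sum_congr rfl fun i _ => hTcoeffp1 i]
    have hS : ∀ i : Fin p, ∑ j ∈ Finset.univ.erase i, κ j = (∑ j, κ j) - κ i :=
      fun i => Finset.sum_erase_eq_sub (Finset.mem_univ i)
    calc ∑ i, m i * (κ i * -(∑ j ∈ Finset.univ.erase i, κ j) + 1)
        = ∑ i, (m i * (1 + κ i * κ i) - (m i * κ i) * (∑ j, κ j)) := by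
          refine Finset.sum_congr rfl fun i _ => ?_
          rw [hS i]; ring
      _ = _ := by rw [Finset.sum_sub_distrib, ← Finset.sum_mul]
  -- degree bound
  have hTdeg : ∀ i : Fin p, (C (m i) * (C (κ i) * X + 1) * Q i).natDegree ≤ p := by
    intro i
    refine le_trans (natDegree_mul_le) ?_
    have h1 : (C (m i) * (C (κ i) * X + 1)).natDegree ≤ 1 := by
      compute_degree
    have h2 := hQdeg i
    omega
  have hPnat : P.natDegree ≤ p := by
    rw [hP]
    exact natDegree_sum_le_of_forall_le _ _ fun i _ => hTdeg i
  have hdegle : P.degree ≤ (p : ℕ) := natDegree_le_iff_degree_le.mp hPnat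
  -- evaluation at κ k
  have heval : ∀ k : Fin p, P.eval (κ k)
      = (m k * (κ k * κ k + 1)) * ∏ j ∈ Finset.univ.erase k, (κ k - κ j) := by
    intro k
    rw [hP, eval_finset_sum]
    rw [Finset.sum_eq_single k]
    · simp [eval_prod]
    · intro i _ hik
      have hk : k ∈ Finset.univ.erase i := Finset.mem_erase.mpr ⟨(Ne.symm hik), Finset.mem_univ k⟩
      simp only [eval_mul, eval_prod]
      rw [Finset.prod_eq_zero hk (by simp)]
      ring
    · intro h; exact absurd (Finset.mem_univ k) h
  have hApos : ∀ k : Fin p, 0 < (-1:ℝ) ^ (p - 1 - (k:ℕ)) * P.eval (κ k) := by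
    intro k
    have hsplit : Finset.univ.erase k = Finset.Iio k ∪ Finset.Ioi k := by
      ext j
      simp only [Finset.mem_erase, Finset.mem_univ, and_true, Finset.mem_union,
        Finset.mem_Iio, Finset.mem_Ioi]
      exact ne_iff_lt_or_gt
    have hdisj : Disjoint (Finset.Iio k) (Finset.Ioi k) := by
      rw [Finset.disjoint_left]
      intro j hj1 hj2
      simp only [Finset.mem_Iio] at hj1
      simp only [Finset.mem_Ioi] at hj2
      exact absurd (hj1.trans hj2) (lt_irrefl j)
    have hIio : (0:ℝ) < ∏ j ∈ Finset.Iio k, (κ k - κ j) :=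
      Finset.prod_pos fun j hj => sub_pos.mpr (hκ (Finset.mem_Iio.mp hj))
    have hIoi : (0:ℝ) < (-1:ℝ) ^ (p - 1 - (k:ℕ)) * ∏ j ∈ Finset.Ioi k, (κ k - κ j) := by
      have hcIoi : (Finset.Ioi k).card = p - 1 - (k:ℕ) := Fin.card_Ioi k
      rw [← hcIoi]
      exact aux_prod_neg _ _ fun j hj => sub_neg.mpr (hκ (Finset.mem_Ioi.mp hj))
    rw [heval k, hsplit, Finset.prod_union hdisj]
    have hmk : (0:ℝ) < m k * (κ k * κ k + 1) := by nlinarith [hm k, sq_nonneg (κ k)]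
    calc (0:ℝ) < (m k * (κ k * κ k + 1) * ∏ j ∈ Finset.Iio k, (κ k - κ j))
          * ((-1:ℝ) ^ (p - 1 - (k:ℕ)) * ∏ j ∈ Finset.Ioi k, (κ k - κ j)) :=
        mul_pos (mul_pos hmk hIio) hIoi
      _ = (-1:ℝ) ^ (p - 1 - (k:ℕ)) * (m k * (κ k * κ k + 1) *
          ((∏ j ∈ Finset.Iio k, (κ k - κ j)) * ∏ j ∈ Finset.Ioi k, (κ k - κ j))) := by ring
  -- opposite signs at consecutive κ's
  have hOpp : ∀ k : Fin (p-1),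
      P.eval (κ ⟨(k:ℕ), by have := k.isLt; omega⟩) *
        P.eval (κ ⟨(k:ℕ)+1, by have := k.isLt; omega⟩) < 0 := by
    intro k
    have h1 := hApos ⟨(k:ℕ), by have := k.isLt; omega⟩
    have h2 := hApos ⟨(k:ℕ)+1, by have := k.isLt; omega⟩
    simp only [Fin.val_mk] at h1 h2
    have he : p - 1 - (k:ℕ) = (p - 1 - ((k:ℕ)+1)) + 1 := by have := k.isLt; omega
    rw [he, pow_succ] at h1
    set E := (-1:ℝ) ^ (p - 1 - ((k:ℕ)+1)) with hE
    have hE2 : E * E = 1 := by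
      rw [hE, ← pow_add]; exact Even.neg_one_pow (Even.add_self _)
    nlinarith [mul_pos h1 h2]
  -- interior roots
  have hroot : ∀ k : Fin (p-1), ∃ y,
      κ ⟨(k:ℕ), by have := k.isLt; omega⟩ < y ∧
      y < κ ⟨(k:ℕ)+1, by have := k.isLt; omega⟩ ∧ P.eval y = 0 := by
    intro k
    set x1 := κ ⟨(k:ℕ), by have := k.isLt; omega⟩ with hx1
    set x2 := κ ⟨(k:ℕ)+1, by have := k.isLt; omega⟩ with hx2
    have hlt : x1 < x2 := hκ (by simp [Fin.lt_def])
    have hopp := hOpp k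
    have hcont : ContinuousOn (fun x : ℝ => P.eval x) (Set.Icc x1 x2) :=
      P.continuous.continuousOn
    rcases lt_or_ge (P.eval x1) 0 with hneg | hpos
    · have hy2 : 0 < P.eval x2 := by nlinarith
      obtain ⟨y, hy, hy0⟩ := intermediate_value_Ioo hlt.le hcont ⟨hneg, hy2⟩
      exact ⟨y, hy.1, hy.2, hy0⟩
    · have hx1pos : 0 < P.eval x1 := by
        rcases eq_or_lt_of_le hpos with h | h
        · exfalso; rw [← h] at hopp; simp at hopp
        · exact h
      have hy2 : P.eval x2 < 0 := by nlinarith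
      obtain ⟨y, hy, hy0⟩ := intermediate_value_Ioo' hlt.le hcont ⟨hy2, hx1pos⟩
      exact ⟨y, hy.1, hy.2, hy0⟩
  choose s hs1 hs2 hs3 using hroot
  have smono : StrictMono s := by
    intro i j hij
    have h1 := hs2 i
    have h2 := hs1 j
    have h3 : κ ⟨(i:ℕ)+1, by have := i.isLt; omega⟩ ≤ κ ⟨(j:ℕ), by have := j.isLt; omega⟩ :=
      hκ.monotone (by simp only [Fin.mk_le_mk]; exact Fin.lt_iff_val_lt_val.mp hij)
    linarith
  refine ⟨⟨s, smono, fun i => ⟨hs3 i, hs1 i, hs2 i⟩⟩, ?_, ?_⟩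
  · -- case (b)
    intro hz
    have hc1 : P.coeff (p-1) = ∑ i, m i * (1 + κ i * κ i) := by
      rw [hPcoeffp1, hz]; ring
    have hne : (Finset.univ : Finset (Fin p)).Nonempty := ⟨⟨0, by omega⟩, Finset.mem_univ _⟩
    have hc1pos : 0 < P.coeff (p-1) := by
      rw [hc1]
      exact Finset.sum_pos (fun i _ => by nlinarith [hm i, sq_nonneg (κ i)]) hne
    have hdb : P.degree ≤ ((p-1 : ℕ) : WithBot ℕ) := by
      rw [degree_le_iff_coeff_zero]
      intro k hk
      have hk' : p - 1 < k := by exact_mod_cast hk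
      rcases eq_or_lt_of_le (show p ≤ k by omega) with h | h
      · rw [← h, hPcoeffp]; exact hz
      · exact coeff_eq_zero_of_natDegree_lt (lt_of_le_of_lt hPnat h)
    have hdeg : P.degree = ((p-1 : ℕ) : WithBot ℕ) :=
      le_antisymm hdb (le_degree_of_ne_zero (ne_of_gt hc1pos))
    have hnat : P.natDegree = p - 1 := natDegree_eq_of_degree_eq_some hdeg
    have hP0 : P ≠ 0 := fun h => by simp [h] at hc1pos
    have hsetq : {x : ℝ | P.eval x = 0} = ↑P.roots.toFinset := by
      ext x; simp [Polynomial.mem_roots, hP0, Polynomial.IsRoot]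
    refine ⟨hdeg, ?_⟩
    rw [hsetq, Set.ncard_coe_finset]
    have hub : P.roots.toFinset.card ≤ p - 1 := by
      refine le_trans (Multiset.toFinset_card_le _) ?_
      rw [← hnat]
      exact_mod_cast P.card_roots' 
    have hFsub : Finset.image s Finset.univ ⊆ P.roots.toFinset := by
      intro x hx
      obtain ⟨i, _, rfl⟩ := Finset.mem_image.mp hx
      rw [Multiset.mem_toFinset, Polynomial.mem_roots hP0]
      exact hs3 i
    have hFcard : (Finset.image s Finset.univ).card = p - 1 := by
      rw [Finset.card_image_of_injective _ smono.injective, Finset.card_univ,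
        Fintype.card_fin]
    have hlb : p - 1 ≤ P.roots.toFinset.card := by
      rw [← hFcard]; exact Finset.card_le_card hFsub
    omega
  · -- case (c)
    intro hz
    have hdeg : P.degree = (p : ℕ) :=
      le_antisymm hdegle (le_degree_of_ne_zero (by rw [hPcoeffp]; exact hz))
    have hnat : P.natDegree = p := natDegree_eq_of_degree_eq_some hdeg
    have hlead : P.leadingCoeff = ∑ i, m i * κ i := by
      rw [Polynomial.leadingCoeff, hnat, hPcoeffp]
    have hP0 : P ≠ 0 := fun h => by rw [h] at hPcoeffp; simp at hPcoeffp; exact hz hPcoeffp.symm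
    have hdpos : 0 < P.degree := by
      rw [hdeg]
      exact_mod_cast Nat.pos_of_ne_zero (by omega)
    -- the outer root
    obtain ⟨z, hz0, hzout⟩ : ∃ z, P.eval z = 0 ∧
        (z < κ ⟨0, by omega⟩ ∨ κ ⟨p - 1, by omega⟩ < z) := by
      rcases lt_or_gt_of_ne hz with hneg | hpos
      · have hlast := hApos ⟨p-1, by omega⟩
        rw [show p - 1 - ((⟨p-1, by omega⟩ : Fin p) : ℕ) = 0 by simp, pow_zero, one_mul] at hlast
        have hprod : P.eval (κ ⟨p-1, by omega⟩) * P.leadingCoeff < 0 := by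
          rw [hlead]
          exact mul_neg_of_pos_of_neg hlast hneg
        obtain ⟨y, hy1, hy2⟩ := aux_root_right P hdpos _ hprod
        exact ⟨y, hy2, Or.inr hy1⟩
      · set Q' := P.comp (-X : ℝ[X]) with hQ'
        have hnX : (-X : ℝ[X]).natDegree = 1 := by simp
        have hlc : Q'.leadingCoeff = P.leadingCoeff * (-1)^p := by
          rw [hQ', leadingCoeff_comp (by rw [hnX]; omega), hnat]
          rw [leadingCoeff_neg, leadingCoeff_X]
        have hQ'0 : Q' ≠ 0 := leadingCoeff_ne_zero.mp (by
          rw [hlc, hlead]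
          exact mul_ne_zero hz (pow_ne_zero _ (by norm_num)))
        have hQ'deg : 0 < Q'.degree := by
          rw [← natDegree_pos_iff_degree_pos, hQ', natDegree_comp, hnat, hnX]
          omega
        have heval' : ∀ x : ℝ, Q'.eval x = P.eval (-x) := by
          intro x; rw [hQ', eval_comp]; simp
        have h0 := hApos ⟨0, by omega⟩
        simp only [Fin.val_mk, Nat.sub_zero] at h0
        have hprod : Q'.eval (-(κ ⟨0, by omega⟩)) * Q'.leadingCoeff < 0 := by
          rw [heval' _, neg_neg, hlc, hlead]
          have hE2 : ((-1:ℝ)^(p-1)) * ((-1:ℝ)^(p-1)) = 1 := by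
            rw [← pow_add]; exact Even.neg_one_pow (Even.add_self _)
          have hstep : (-1:ℝ)^p = -((-1:ℝ)^(p-1)) := by
            have h := pow_succ (-1:ℝ) (p-1)
            rw [show (p-1)+1 = p by omega] at h
            rw [h]; ring
          rw [hstep]
          nlinarith [h0, hpos]
        obtain ⟨y, hy1, hy2⟩ := aux_root_right Q' hQ'deg _ hprod
        refine ⟨-y, by rw [← heval' y]; exact hy2, Or.inl (by linarith)⟩
    have hsetq : {x : ℝ | P.eval x = 0} = ↑P.roots.toFinset := by
      ext x; simp [Polynomial.mem_roots, hP0, Polynomial.IsRoot]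
    refine ⟨hdeg, ?_, z, hz0, hzout⟩
    rw [hsetq, Set.ncard_coe_finset]
    have hub : P.roots.toFinset.card ≤ p := by
      refine le_trans (Multiset.toFinset_card_le _) ?_
      rw [← hnat]
      exact_mod_cast P.card_roots'
    have hzne : ∀ i : Fin (p-1), z ≠ s i := by
      intro i
      have hA : κ ⟨0, by omega⟩ ≤ κ ⟨(i:ℕ), by have := i.isLt; omega⟩ :=
        hκ.monotone (by simp [Fin.mk_le_mk])
      have hB : κ ⟨(i:ℕ)+1, by have := i.isLt; omega⟩ ≤ κ ⟨p-1, by omega⟩ :=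
        hκ.monotone (by simp only [Fin.mk_le_mk]; have := i.isLt; omega)
      have h1 := hs1 i
      have h2 := hs2 i
      rcases hzout with h | h
      · exact ne_of_lt (by linarith)
      · exact ne_of_gt (by linarith)
    have hznotmem : z ∉ Finset.image s Finset.univ := by
      rw [Finset.mem_image]
      rintro ⟨i, _, hi⟩
      exact hzne i hi.symm
    have hFsub : insert z (Finset.image s Finset.univ) ⊆ P.roots.toFinset := by
      rw [Finset.insert_subset_iff]
      constructor
      · rw [Multiset.mem_toFinset, Polynomial.mem_roots hP0]; exact hz0
      · intro x hx
        obtain ⟨i, _, rfl⟩ := Finset.mem_image.mp hx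
        rw [Multiset.mem_toFinset, Polynomial.mem_roots hP0]
        exact hs3 i
    have hFcard : (insert z (Finset.image s Finset.univ)).card = p := by
      rw [Finset.card_insert_of_notMem hznotmem,
        Finset.card_image_of_injective _ smono.injective, Finset.card_univ, Fintype.card_fin]
      omega
    have hlb : p ≤ P.roots.toFinset.card := by
      rw [← hFcard]; exact Finset.card_le_card hFsub
    omega
end

section
/- Let κ₁ < κ₂ < ⋯ < κ_p be real numbers and m₁, …, m_p positive reals with Σ_{i=1}^p m_i κ_i ≠ 0, and define P(s) := Σ_{i=1}^p m_i (κ_i s − 1) ∏_{j ≠ i} (s − κ_j). Set α := #{ i : κ_i < −1 }, β := #{ i : |κ_i| < 1 }, γ := #{ i : κ_i > 1 }, δ := #{ i : |κ_i| = 1 }, and let q be the number of distinct real roots s of P with |s| > 1. Then α + γ − 1 ≤ q ≤ p − (β − 1) − δ = α + γ + 1. -/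
open scoped BigOperators

open Polynomial Finset

lemma aux_poly (p : ℕ) (hp : 1 ≤ p) (κ m : Fin p → ℝ) :
    ∃ Q : Polynomial ℝ, (∀ s, Q.eval s = ∑ i, m i * (κ i * s - 1) *
        ∏ j ∈ Finset.univ.erase i, (s - κ j)) ∧
      Q.natDegree ≤ p ∧ Q.coeff p = ∑ i, m i * κ i := by
  classical
  set B : Fin p → ℝ[X] := fun i => ∏ j ∈ Finset.univ.erase i, (X - C (κ j)) with hB
  have hBmonic : ∀ i, (B i).Monic := fun i => monic_prod_of_monic _ _ (fun j _ => monic_X_sub_C _)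
  have hBdeg : ∀ i, (B i).natDegree = p - 1 := by
    intro i
    have := natDegree_prod_of_monic (Finset.univ.erase i) (fun j => X - C (κ j))
      (fun j _ => monic_X_sub_C _)
    rw [hB]
    rw [this]
    simp [natDegree_X_sub_C, Finset.card_erase_of_mem]
  refine ⟨∑ i, C (m i) * (C (κ i) * X - 1) * B i, ?_, ?_, ?_⟩
  · intro s
    simp [B, eval_finset_sum, eval_prod]
  · apply natDegree_sum_le_of_forall_le
    intro i _
    calc (C (m i) * (C (κ i) * X - 1) * B i).natDegree
        ≤ (C (m i) * (C (κ i) * X - 1)).natDegree + (B i).natDegree := natDegree_mul_le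
      _ ≤ 1 + (p - 1) := by
          gcongr
          · refine le_trans natDegree_mul_le ?_
            simp only [natDegree_C, zero_add]
            refine le_trans (natDegree_sub_le _ _) ?_
            simp [natDegree_C_mul_le]
            exact le_trans (natDegree_mul_le) (by simp)
          · exact (hBdeg i).le
      _ ≤ p := by omega
  · rw [finset_sum_coeff]
    apply Finset.sum_congr rfl
    intro i _
    have h1 : C (m i) * (C (κ i) * X - 1) * B i
        = C (m i * κ i) * (X * B i) - C (m i) * B i := by ring_nf; rw [C_mul]; ring
    rw [h1, coeff_sub, coeff_C_mul, coeff_C_mul]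
    have hp' : p = (p-1) + 1 := by omega
    rw [hp', coeff_X_mul]
    have : (B i).coeff (p - 1) = 1 := by
      have := (hBmonic i).leadingCoeff
      rwa [leadingCoeff, hBdeg i] at this
    rw [this]
    have hz : (B i).coeff (p - 1 + 1) = 0 := by
      apply coeff_eq_zero_of_natDegree_lt
      rw [hBdeg i]; omega
    rw [hz]
    ring
open Finset

lemma aux_card_Ico (p l h : ℕ) (hh : h ≤ p) :
    (Finset.univ.filter fun i : Fin p => l ≤ i.val ∧ i.val < h).card = h - l := by
  classical
  rw [← Nat.card_Ico l h]
  apply Finset.card_bij (fun i _ => i.val)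
  · intro a ha; simp at ha ⊢; omega
  · intro a ha b hb hab; exact Fin.val_injective hab
  · intro x hx
    simp at hx
    exact ⟨⟨x, by omega⟩, by simp; omega, rfl⟩

lemma aux_down (p : ℕ) (Q : Fin p → Prop) [DecidablePred Q]
    (hdc : ∀ i j : Fin p, i ≤ j → Q j → Q i) (i : Fin p) :
    Q i ↔ i.val < (Finset.univ.filter fun j => Q j).card := by
  constructor
  · intro hQ
    have hsub : (Finset.univ.filter fun j : Fin p => 0 ≤ j.val ∧ j.val < i.val + 1)
        ⊆ Finset.univ.filter fun j => Q j := by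
      intro j hj
      simp at hj ⊢
      exact hdc j i (by omega) hQ
    have := Finset.card_le_card hsub
    rw [aux_card_Ico p 0 (i.val+1) (by omega)] at this
    omega
  · intro hc
    by_contra hQ
    have hsub : (Finset.univ.filter fun j : Fin p => Q j)
        ⊆ Finset.univ.filter fun j : Fin p => 0 ≤ j.val ∧ j.val < i.val := by
      intro j hj
      simp at hj ⊢
      by_contra hji
      exact hQ (hdc i j (by omega) hj)
    have := Finset.card_le_card hsub
    rw [aux_card_Ico p 0 i.val (by omega)] at this
    omega

lemma aux_prod_sign (p : ℕ) (κ : Fin p → ℝ) (hκ : StrictMono κ) (i : Fin p) :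
    0 < (-1:ℝ)^(p-1-i.val) * ∏ j ∈ Finset.univ.erase i, (κ i - κ j) := by
  classical
  have hsplit : ∏ j ∈ Finset.univ.erase i, (κ i - κ j)
      = (∏ j ∈ (Finset.univ.erase i).filter (fun j => j < i), (κ i - κ j)) *
        ∏ j ∈ (Finset.univ.erase i).filter (fun j => ¬ j < i), (κ i - κ j) :=
    (Finset.prod_filter_mul_prod_filter_not _ _ _).symm
  have hpos : 0 < ∏ j ∈ (Finset.univ.erase i).filter (fun j => j < i), (κ i - κ j) := by
    apply Finset.prod_pos
    intro j hj
    simp at hj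
    have := hκ hj.2
    linarith
  have hcard : ((Finset.univ.erase i).filter (fun j => ¬ j < i)).card = p - 1 - i.val := by
    have heq : (Finset.univ.erase i).filter (fun j => ¬ j < i)
        = Finset.univ.filter (fun j : Fin p => i.val + 1 ≤ j.val ∧ j.val < p) := by
      ext j
      simp only [Finset.mem_filter, Finset.mem_erase, Finset.mem_univ, true_and, and_true,
        not_lt, Fin.le_def, Fin.lt_def, Fin.ext_iff]
      constructor
      · rintro ⟨h1, h2⟩; exact ⟨by omega, j.isLt⟩
      · rintro ⟨h1, h2⟩; constructor <;> omega
    rw [heq, aux_card_Ico p (i.val+1) p le_rfl]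
    omega
  have hneg : ∏ j ∈ (Finset.univ.erase i).filter (fun j => ¬ j < i), (κ i - κ j)
      = (-1:ℝ)^(p-1-i.val) * ∏ j ∈ (Finset.univ.erase i).filter (fun j => ¬ j < i), (κ j - κ i) := by
    rw [← hcard]
    rw [← Finset.prod_const (-1:ℝ), ← Finset.prod_mul_distrib]
    apply Finset.prod_congr rfl
    intro j _; ring
  have hpos2 : 0 < ∏ j ∈ (Finset.univ.erase i).filter (fun j => ¬ j < i), (κ j - κ i) := by
    apply Finset.prod_pos
    intro j hj
    simp at hj
    have hij : i < j := lt_of_le_of_ne hj.2 (fun h => hj.1 h.symm)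
    have := hκ hij
    linarith
  rw [hsplit, hneg]
  have hsq : (-1:ℝ)^(p-1-i.val) * (-1:ℝ)^(p-1-i.val) = 1 := by
    rw [← pow_add]
    exact Even.neg_one_pow ⟨p-1-i.val, rfl⟩
  nlinarith [mul_pos hpos hpos2]

section
variable (p : ℕ) (κ m : Fin p → ℝ) (P : ℝ → ℝ)
  (hP : ∀ s : ℝ, P s = ∑ i, m i * (κ i * s - 1) * ∏ j ∈ Finset.univ.erase i, (s - κ j))

include hP in
lemma aux_eval (i : Fin p) :
    P (κ i) = m i * (κ i ^ 2 - 1) * ∏ j ∈ Finset.univ.erase i, (κ i - κ j) := by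
  rw [hP]
  rw [Finset.sum_eq_single i]
  · ring_nf
  · intro i' _ hne
    have : ∏ j ∈ Finset.univ.erase i', (κ i - κ j) = 0 :=
      Finset.prod_eq_zero (Finset.mem_erase.mpr ⟨hne.symm, Finset.mem_univ i⟩) (by ring)
    rw [this]; ring
  · intro h; exact absurd (Finset.mem_univ i) h

include hP in
lemma aux_adj (hκ : StrictMono κ) (hm : ∀ i, 0 < m i) (u : ℕ) (hu : u + 1 < p)
    (hsq : 0 < (κ ⟨u, by omega⟩ ^ 2 - 1) * (κ ⟨u+1, hu⟩ ^ 2 - 1)) :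
    P (κ ⟨u, by omega⟩) * P (κ ⟨u+1, hu⟩) < 0 := by
  set i : Fin p := ⟨u, by omega⟩
  set i' : Fin p := ⟨u+1, hu⟩
  have h1 := aux_prod_sign p κ hκ i
  have h2 := aux_prod_sign p κ hκ i'
  have hcc : (∏ j ∈ Finset.univ.erase i, (κ i - κ j)) *
      (∏ j ∈ Finset.univ.erase i', (κ i' - κ j)) < 0 := by
    have hodd : (-1:ℝ)^(p-1-i.val) * (-1:ℝ)^(p-1-i'.val) = -1 := by
      rw [← pow_add]
      apply Odd.neg_one_pow
      refine ⟨p - 2 - u, ?_⟩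
      show p - 1 - u + (p - 1 - (u+1)) = 2 * (p - 2 - u) + 1
      omega
    nlinarith [mul_pos h1 h2]
  rw [aux_eval p κ m P hP i, aux_eval p κ m P hP i']
  have hm1 := hm i
  have hm2 := hm i'
  nlinarith [mul_pos hm1 hm2, mul_pos (mul_pos hm1 hm2) hsq]
end
open Finset

lemma aux_root_Ioo (f : ℝ → ℝ) (hf : Continuous f) (a b : ℝ) (hab : a < b)
    (h : f a * f b < 0) : ∃ x ∈ Set.Ioo a b, f x = 0 := by
  rcases mul_neg_iff.mp h with ⟨ha, hb⟩ | ⟨ha, hb⟩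
  · obtain ⟨x, hx, hfx⟩ := intermediate_value_Ioo' hab.le hf.continuousOn
      (Set.mem_Ioo.mpr ⟨hb, ha⟩)
    exact ⟨x, hx, hfx⟩
  · obtain ⟨x, hx, hfx⟩ := intermediate_value_Ioo hab.le hf.continuousOn
      (Set.mem_Ioo.mpr ⟨ha, hb⟩)
    exact ⟨x, hx, hfx⟩

lemma aux_chain (f : ℝ → ℝ) (hf : Continuous f) (n : ℕ) (x : Fin (n+1) → ℝ)
    (hx : StrictMono x)
    (hsign : ∀ i : Fin n, f (x i.castSucc) * f (x i.succ) < 0) :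
    ∃ T : Finset ℝ, T.card = n ∧
      ∀ r ∈ T, f r = 0 ∧ x 0 < r ∧ r < x (Fin.last n) := by
  classical
  have hex : ∀ i : Fin n, ∃ r ∈ Set.Ioo (x i.castSucc) (x i.succ), f r = 0 := by
    intro i
    exact aux_root_Ioo f hf _ _ (hx Fin.castSucc_lt_succ) (hsign i)
  choose r hr hr0 using hex
  have hrmono : StrictMono r := by
    intro i j hij
    have h1 : r i < x i.succ := (hr i).2
    have h2 : x j.castSucc < r j := (hr j).1
    have h3 : x i.succ ≤ x j.castSucc := by
      apply hx.monotone
      rw [Fin.le_def]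
      simp only [Fin.val_succ, Fin.coe_castSucc]
      exact Fin.lt_def.mp hij
    linarith
  refine ⟨Finset.univ.image r, ?_, ?_⟩
  · rw [Finset.card_image_of_injective _ hrmono.injective, Finset.card_univ, Fintype.card_fin]
  · intro s hs
    obtain ⟨i, _, rfl⟩ := Finset.mem_image.mp hs
    refine ⟨hr0 i, ?_, ?_⟩
    · calc x 0 ≤ x i.castSucc := hx.monotone (by rw [Fin.le_def]; simp)
        _ < r i := (hr i).1
    · calc r i < x i.succ := (hr i).2
        _ ≤ x (Fin.last n) := hx.monotone (by rw [Fin.le_def]; simp [Fin.val_succ])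


lemma aux_extra (p : ℕ) (hp : 1 ≤ p) (κ m : Fin p → ℝ)
    (hκ : StrictMono κ) (hm : ∀ i, 0 < m i)
    (hH : (∑ i, m i * κ i) ≠ 0)
    (P : ℝ → ℝ)
    (hP : ∀ s : ℝ, P s = ∑ i, m i * (κ i * s - 1) *
        ∏ j ∈ Finset.univ.erase i, (s - κ j))
    (i0 il : Fin p) (hi0 : i0.val = 0) (hil : il.val = p - 1)
    (h0 : κ i0 < -1) (hl : 1 < κ il) :
    ∃ e, P e = 0 ∧ (e < κ i0 ∨ κ il < e) := by
  classical
  obtain ⟨Q, hQe, hQd, hQc⟩ := aux_poly p hp κ m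
  have hPQ : ∀ s, P s = Q.eval s := fun s => by rw [hQe s, hP s]
  have hQc' : Q.coeff p ≠ 0 := by rw [hQc]; exact hH
  have hQdeg : Q.natDegree = p := le_antisymm hQd (Polynomial.le_natDegree_of_ne_zero hQc')
  have hQlead : Q.leadingCoeff = ∑ i, m i * κ i := by
    rw [Polynomial.leadingCoeff, hQdeg, hQc]
  have hQdpos : 0 < Q.degree := Polynomial.natDegree_pos_iff_degree_pos.mp (by omega)
  have hcont : Continuous P := by
    have h : P = fun s => Q.eval s := funext hPQ
    rw [h]; exact Q.continuous_aeval
  have hPl : 0 < P (κ il) := by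
    rw [aux_eval p κ m P hP il]
    have hc := aux_prod_sign p κ hκ il
    have h00 : p - 1 - il.val = 0 := by rw [hil]; omega
    rw [h00, pow_zero, one_mul] at hc
    have h1 := hm il
    have hsq : 0 < κ il ^ 2 - 1 := by nlinarith
    exact mul_pos (mul_pos h1 hsq) hc
  rcases lt_or_gt_of_ne hH with hHneg | hHpos
  · -- H < 0 : root beyond κ il
    have htd : Filter.Tendsto (fun x => Q.eval x) Filter.atTop Filter.atBot :=
      Polynomial.tendsto_atBot_of_leadingCoeff_nonpos Q hQdpos (by rw [hQlead]; linarith)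
    have hev : ∀ᶠ x in Filter.atTop, Q.eval x < 0 ∧ κ il < x :=
      (htd.eventually_lt_atBot 0).and (Filter.eventually_gt_atTop (κ il))
    obtain ⟨x, hx1, hx2⟩ := hev.exists
    obtain ⟨e, he, he0⟩ := aux_root_Ioo P hcont (κ il) x hx2
      (mul_neg_of_pos_of_neg hPl (by rw [hPQ x]; exact hx1))
    exact ⟨e, he0, Or.inr he.1⟩
  · -- H > 0 : root before κ i0
    set Qn := Q.comp (-Polynomial.X) with hQn
    have hnX : (-Polynomial.X : Polynomial ℝ).natDegree = 1 := by
      rw [Polynomial.natDegree_neg, Polynomial.natDegree_X]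
    have hQnd : Qn.natDegree = p := by
      rw [hQn, Polynomial.natDegree_comp, hnX, hQdeg, mul_one]
    have hQndpos : 0 < Qn.degree := Polynomial.natDegree_pos_iff_degree_pos.mp (by omega)
    have hQnlead : Qn.leadingCoeff = (∑ i, m i * κ i) * (-1)^p := by
      rw [hQn, Polynomial.leadingCoeff_comp (by rw [hnX]; omega), hQlead, hQdeg]
      congr 1
      rw [Polynomial.leadingCoeff_neg, Polynomial.leadingCoeff_X]
    have hQneval : ∀ t, Qn.eval t = Q.eval (-t) := by
      intro t; rw [hQn, Polynomial.eval_comp]; simp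
    have key : ∃ x, x < κ i0 ∧ P x * P (κ i0) < 0 := by
      have hP0 : P (κ i0) = m i0 * (κ i0 ^ 2 - 1) * ∏ j ∈ Finset.univ.erase i0, (κ i0 - κ j) :=
        aux_eval p κ m P hP i0
      have hc0 := aux_prod_sign p κ hκ i0
      rw [hi0] at hc0
      rcases Nat.even_or_odd p with hpe | hpo
      · -- p even: Q → +∞ at -∞, P(κ i0) < 0
        have hlead : 0 < Qn.leadingCoeff := by
          rw [hQnlead, hpe.neg_one_pow, mul_one]; exact hHpos
        have htd : Filter.Tendsto (fun t => Qn.eval t) Filter.atTop Filter.atTop :=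
          Polynomial.tendsto_atTop_of_leadingCoeff_nonneg Qn hQndpos hlead.le
        obtain ⟨t, ht1, ht2⟩ := ((htd.eventually_gt_atTop 0).and
          (Filter.eventually_gt_atTop (-(κ i0)))).exists
        have hPκ0 : P (κ i0) < 0 := by
          obtain ⟨k, hk⟩ := hpe
          have hodd : Odd (p - 1 - 0) := ⟨k - 1, by omega⟩
          rw [hodd.neg_one_pow] at hc0
          rw [hP0]
          have hsq : 0 < κ i0 ^ 2 - 1 := by nlinarith
          have hcneg : ∏ j ∈ Finset.univ.erase i0, (κ i0 - κ j) < 0 := by linarith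
          exact mul_neg_of_pos_of_neg (mul_pos (hm i0) hsq) hcneg
        refine ⟨-t, by linarith, ?_⟩
        have hpt : 0 < P (-t) := by rw [hPQ, ← hQneval]; exact ht1
        exact mul_neg_of_pos_of_neg hpt hPκ0
      · -- p odd
        have hlead : Qn.leadingCoeff < 0 := by
          rw [hQnlead, hpo.neg_one_pow, mul_neg_one]; linarith
        have htd : Filter.Tendsto (fun t => Qn.eval t) Filter.atTop Filter.atBot :=
          Polynomial.tendsto_atBot_of_leadingCoeff_nonpos Qn hQndpos hlead.le
        obtain ⟨t, ht1, ht2⟩ := ((htd.eventually_lt_atBot 0).and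
          (Filter.eventually_gt_atTop (-(κ i0)))).exists
        have hPκ0 : 0 < P (κ i0) := by
          obtain ⟨k, hk⟩ := hpo
          have heven : Even (p - 1 - 0) := ⟨k, by omega⟩
          rw [heven.neg_one_pow, one_mul] at hc0
          rw [hP0]
          have hsq : 0 < κ i0 ^ 2 - 1 := by nlinarith
          exact mul_pos (mul_pos (hm i0) hsq) hc0
        refine ⟨-t, by linarith, ?_⟩
        have hpt : P (-t) < 0 := by rw [hPQ, ← hQneval]; exact ht1
        exact mul_neg_of_neg_of_pos hpt hPκ0
    obtain ⟨x, hx1, hx2⟩ := key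
    obtain ⟨e, he, he0⟩ := aux_root_Ioo P hcont x (κ i0) hx1 hx2
    exact ⟨e, he0, Or.inl he.2⟩

lemma aux_zone (p : ℕ) (κ m : Fin p → ℝ) (P : ℝ → ℝ)
    (hP : ∀ s : ℝ, P s = ∑ i, m i * (κ i * s - 1) * ∏ j ∈ Finset.univ.erase i, (s - κ j))
    (hκ : StrictMono κ) (hm : ∀ i, 0 < m i) (hcont : Continuous P)
    (l n : ℕ) (hln : l + n < p) (lo hi : Fin p) (hlo : lo.val = l) (hhi : hi.val = l + n)
    (hsq : ∀ (u : ℕ), l ≤ u → u < l + n → ∀ (hu1 : u < p) (hu2 : u + 1 < p),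
      0 < (κ ⟨u, hu1⟩ ^ 2 - 1) * (κ ⟨u+1, hu2⟩ ^ 2 - 1)) :
    ∃ T : Finset ℝ, T.card = n ∧
      ∀ r ∈ T, P r = 0 ∧ κ lo < r ∧ r < κ hi := by
  have hx : StrictMono (fun j : Fin (n+1) => κ ⟨l + j.val, by omega⟩) := by
    intro i j hij
    exact hκ (by simp only [Fin.mk_lt_mk]; omega)
  have hsign : ∀ i : Fin n,
      P ((fun j : Fin (n+1) => κ ⟨l + j.val, by omega⟩) i.castSucc) *
      P ((fun j : Fin (n+1) => κ ⟨l + j.val, by omega⟩) i.succ) < 0 := by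
    intro i
    exact aux_adj p κ m P hP hκ hm (l + i.val) (by omega)
      (hsq (l + i.val) (by omega) (by omega) (by omega) (by omega))
  obtain ⟨T, hT1, hT2⟩ := aux_chain P hcont n (fun j : Fin (n+1) => κ ⟨l + j.val, by omega⟩)
    hx hsign
  refine ⟨T, hT1, fun r hr => ?_⟩
  obtain ⟨h1, h2, h3⟩ := hT2 r hr
  refine ⟨h1, ?_, ?_⟩
  · have e1 : κ lo = (fun j : Fin (n+1) => κ ⟨l + j.val, by omega⟩) 0 :=
      congrArg κ (Fin.ext (by simp [hlo]))
    rw [e1]; exact h2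
  · have e2 : κ hi = (fun j : Fin (n+1) => κ ⟨l + j.val, by omega⟩) (Fin.last n) :=
      congrArg κ (Fin.ext (by simp [hhi]))
    rw [e2]; exact h3

set_option maxHeartbeats 1000000 in
/-- For `κ₁ < ⋯ < κ_p` with positive weights `m_i` and `Σ m_i κ_i ≠ 0`, let
`P(s) = Σ m_i (κ_i s − 1) ∏_{j≠i} (s − κ_j)`, and set `α = #{i : κ_i < −1}`,
`β = #{i : |κ_i| < 1}`, `γ = #{i : κ_i > 1}`, `δ = #{i : |κ_i| = 1}`. If `q` is the number of
distinct real roots `s` of `P` with `|s| > 1`, then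
`α + γ − 1 ≤ q ≤ p − (β − 1) − δ = α + γ + 1`. -/
theorem statement19 (p : ℕ) (hp : 1 ≤ p) (κ m : Fin p → ℝ)
    (hκ : StrictMono κ) (hm : ∀ i, 0 < m i)
    (hH : (∑ i, m i * κ i) ≠ 0)
    (P : ℝ → ℝ)
    (hP : ∀ s : ℝ, P s = ∑ i, m i * (κ i * s - 1) *
        ∏ j ∈ Finset.univ.erase i, (s - κ j))
    (α β γ δ q : ℕ)
    (hα : α = (Finset.univ.filter fun i : Fin p => κ i < -1).card)
    (hβ : β = (Finset.univ.filter fun i : Fin p => |κ i| < 1).card)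
    (hγ : γ = (Finset.univ.filter fun i : Fin p => 1 < κ i).card)
    (hδ : δ = (Finset.univ.filter fun i : Fin p => |κ i| = 1).card)
    (hq : q = Set.ncard {s : ℝ | P s = 0 ∧ 1 < |s|}) :
    (α : ℤ) + γ - 1 ≤ (q : ℤ) ∧
    (q : ℤ) ≤ (p : ℤ) - ((β : ℤ) - 1) - δ ∧
    (p : ℤ) - ((β : ℤ) - 1) - δ = (α : ℤ) + γ + 1 := by
  classical
  -- the polynomial
  obtain ⟨Q, hQe, hQd, hQc⟩ := aux_poly p hp κ m
  have hPQ : ∀ s, P s = Q.eval s := fun s => by rw [hQe s, hP s]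
  have hQc' : Q.coeff p ≠ 0 := by rw [hQc]; exact hH
  have hQne : Q ≠ 0 := fun h => hQc' (by rw [h]; simp)
  have hQdeg : Q.natDegree = p := le_antisymm hQd (Polynomial.le_natDegree_of_ne_zero hQc')
  have hcont : Continuous P := by
    have h : P = fun s => Q.eval s := funext hPQ
    rw [h]; exact Q.continuous_aeval
  set R : Finset ℝ := Q.roots.toFinset with hR
  have hRcard : R.card ≤ p := by
    calc R.card ≤ Multiset.card Q.roots := Multiset.toFinset_card_le _
      _ ≤ Q.natDegree := Q.card_roots'
      _ = p := hQdeg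
  have hmemR : ∀ s : ℝ, P s = 0 → s ∈ R :=
    fun s hs => Multiset.mem_toFinset.mpr (Polynomial.mem_roots'.mpr
      ⟨hQne, by rw [Polynomial.IsRoot, ← hPQ s]; exact hs⟩)
  have hPofR : ∀ s ∈ R, P s = 0 := fun s hs => by
    rw [hPQ s]; exact (Polynomial.mem_roots'.mp (Multiset.mem_toFinset.mp hs)).2
  have hqcard : q = (R.filter fun s => 1 < |s|).card := by
    rw [hq]
    rw [show {s : ℝ | P s = 0 ∧ 1 < |s|} = ↑(R.filter fun s => 1 < |s|) by
      ext s
      simp only [Set.mem_setOf_eq, Finset.coe_filter, Finset.mem_coe]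
      exact ⟨fun ⟨h1, h2⟩ => ⟨hmemR s h1, h2⟩, fun ⟨h1, h2⟩ => ⟨hPofR s h1, h2⟩⟩]
    exact Set.ncard_coe_finset _
  -- index counting
  have hαi : ∀ i : Fin p, κ i < -1 ↔ i.val < α := by
    intro i; rw [hα]
    exact aux_down p (fun j => κ j < -1)
      (fun i j hij h => lt_of_le_of_lt (hκ.monotone hij) h) i
  set a := (Finset.univ.filter fun i : Fin p => κ i ≤ -1).card with ha
  set b := (Finset.univ.filter fun i : Fin p => κ i < 1).card with hb
  set cc := (Finset.univ.filter fun i : Fin p => κ i ≤ 1).card with hcc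
  have hai : ∀ i : Fin p, κ i ≤ -1 ↔ i.val < a :=
    fun i => aux_down p (fun j => κ j ≤ -1)
      (fun i j hij h => le_trans (hκ.monotone hij) h) i
  have hbi : ∀ i : Fin p, κ i < 1 ↔ i.val < b :=
    fun i => aux_down p (fun j => κ j < 1)
      (fun i j hij h => lt_of_le_of_lt (hκ.monotone hij) h) i
  have hci : ∀ i : Fin p, κ i ≤ 1 ↔ i.val < cc :=
    fun i => aux_down p (fun j => κ j ≤ 1)
      (fun i j hij h => le_trans (hκ.monotone hij) h) i
  have hγcc : cc + γ = p := by
    have heq : (Finset.univ.filter fun i : Fin p => 1 < κ i)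
        = Finset.univ.filter fun i : Fin p => ¬ κ i ≤ 1 := by
      ext i; simp [not_le]
    have h := Finset.card_filter_add_card_filter_not
      (s := (Finset.univ : Finset (Fin p))) (fun i : Fin p => κ i ≤ 1)
    rw [hγ, heq]
    simp only [Finset.card_univ, Fintype.card_fin] at h
    omega
  have hαa : α ≤ a := by
    rw [hα, ha]
    apply Finset.card_le_card
    intro i hi
    simp only [Finset.mem_filter, Finset.mem_univ, true_and] at hi ⊢
    linarith
  have hab : a ≤ b := by
    rw [ha, hb]
    apply Finset.card_le_card
    intro i hi
    simp only [Finset.mem_filter, Finset.mem_univ, true_and] at hi ⊢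
    linarith
  have hbcc : b ≤ cc := by
    rw [hb, hcc]
    apply Finset.card_le_card
    intro i hi
    simp only [Finset.mem_filter, Finset.mem_univ, true_and] at hi ⊢
    linarith
  have hccp : cc ≤ p := by
    rw [hcc]
    calc (Finset.univ.filter fun i : Fin p => κ i ≤ 1).card
        ≤ (Finset.univ : Finset (Fin p)).card := Finset.card_filter_le _ _
      _ = p := by simp
  have hβba : β = b - a := by
    rw [hβ]
    rw [show (Finset.univ.filter fun i : Fin p => |κ i| < 1)
        = Finset.univ.filter (fun i : Fin p => a ≤ i.val ∧ i.val < b) from by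
      ext i
      simp only [Finset.mem_filter, Finset.mem_univ, true_and, abs_lt]
      rw [← hbi i]
      constructor
      · rintro ⟨h1, h2⟩
        refine ⟨?_, h2⟩
        by_contra hia
        have := (hai i).mpr (by omega)
        linarith
      · rintro ⟨h1, h2⟩
        refine ⟨?_, h2⟩
        have hno : ¬ (κ i ≤ -1) := fun hle => by have := (hai i).mp hle; omega
        linarith]
    exact aux_card_Ico p a b (le_trans hbcc hccp)
  -- partition
  have hpart : α + β + γ + δ = p := by
    have h4 : ∀ x : ℝ, ((if x < -1 then 1 else 0) + (if |x| < 1 then 1 else 0)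
        + (if 1 < x then 1 else 0) + (if |x| = 1 then 1 else 0) : ℕ) = 1 := by
      intro x
      rcases lt_trichotomy x (-1) with h | h | h
      · have h1 : ¬ |x| < 1 := by rw [abs_of_neg (by linarith)]; linarith
        have h2 : ¬ 1 < x := by linarith
        have h3 : ¬ |x| = 1 := by rw [abs_of_neg (by linarith)]; linarith
        simp [h, h1, h2, h3]
      · have h0 : ¬ x < -1 := by rw [h]; exact lt_irrefl _
        have h1 : ¬ |x| < 1 := by rw [h]; norm_num
        have h2 : ¬ 1 < x := by rw [h]; norm_num
        have h3 : |x| = 1 := by rw [h]; norm_num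
        simp [h0, h1, h2, h3]
      · rcases lt_trichotomy x 1 with g | g | g
        · have h0 : ¬ x < -1 := by linarith
          have h1 : |x| < 1 := abs_lt.mpr ⟨h, g⟩
          have h2 : ¬ 1 < x := by linarith
          have h3 : ¬ |x| = 1 := by intro hc; rw [← hc] at h1; linarith
          simp [h0, h1, h2, h3]
        · have h0 : ¬ x < -1 := by linarith
          have h1 : ¬ |x| < 1 := by rw [g]; norm_num
          have h2 : ¬ 1 < x := by rw [g]; exact lt_irrefl _
          have h3 : |x| = 1 := by rw [g]; norm_num
          simp [h0, h1, h2, h3]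
        · have h0 : ¬ x < -1 := by linarith
          have h1 : ¬ |x| < 1 := by rw [abs_of_pos (by linarith)]; linarith
          have h3 : ¬ |x| = 1 := by rw [abs_of_pos (by linarith)]; linarith
          simp [h0, h1, g, h3]
    rw [hα, hβ, hγ, hδ, Finset.card_filter, Finset.card_filter, Finset.card_filter,
      Finset.card_filter, ← Finset.sum_add_distrib, ← Finset.sum_add_distrib,
      ← Finset.sum_add_distrib]
    rw [Finset.sum_congr rfl (fun i _ => h4 (κ i))]
    simp
  have hαp : α ≤ p := le_trans hαa (le_trans hab (le_trans hbcc hccp))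
  -- roots at |κ| = 1
  have hDp : ∀ s ∈ (Finset.univ.filter fun i : Fin p => |κ i| = 1).image κ,
      P s = 0 ∧ |s| = 1 := by
    intro s hs
    obtain ⟨i, hi, rfl⟩ := Finset.mem_image.mp hs
    simp only [Finset.mem_filter, Finset.mem_univ, true_and] at hi
    refine ⟨?_, hi⟩
    rw [aux_eval p κ m P hP i]
    have hsq : κ i ^ 2 = 1 := by rw [← sq_abs, hi]; norm_num
    rw [hsq]; ring
  have hDcard : ((Finset.univ.filter fun i : Fin p => |κ i| = 1).image κ).card = δ := by
    rw [hδ]; exact Finset.card_image_of_injective _ hκ.injective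
  -- upper bound
  have hub : q + ((β - 1) + δ) ≤ p := by
    have key := Finset.card_filter_add_card_filter_not (s := R)
      (fun s : ℝ => 1 < |s|)
    set Dp := (Finset.univ.filter fun i : Fin p => |κ i| = 1).image κ with hDp'
    by_cases hβ1 : 1 ≤ β
    · -- middle chain roots
      have hapb : a + (β - 1) < p := by omega
      obtain ⟨ia, hiav⟩ : ∃ i : Fin p, i.val = a := ⟨⟨a, by omega⟩, rfl⟩
      obtain ⟨ib1, hib1v⟩ : ∃ i : Fin p, i.val = b - 1 := ⟨⟨b - 1, by omega⟩, rfl⟩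
      have hκia : -1 < κ ia := by
        by_contra hc
        have := (hai ia).mp (by linarith)
        rw [hiav] at this; omega
      have hκib1 : κ ib1 < 1 := (hbi ib1).mpr (by rw [hib1v]; omega)
      obtain ⟨Tm, hTm1, hTm2⟩ := aux_zone p κ m P hP hκ hm hcont a (β - 1) hapb
        ia ib1 hiav (by rw [hib1v]; omega)
        (by
          intro u h1 h2 hu1 hu2
          have k1l : -1 < κ ⟨u, hu1⟩ := by
            by_contra hc
            have := (hai ⟨u, hu1⟩).mp (by linarith)
            simp only [Fin.val_mk] at this; omega
          have k1r : κ ⟨u, hu1⟩ < 1 := (hbi _).mpr (by simp only [Fin.val_mk]; omega)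
          have k2l : -1 < κ ⟨u+1, hu2⟩ := by
            by_contra hc
            have := (hai ⟨u+1, hu2⟩).mp (by linarith)
            simp only [Fin.val_mk] at this; omega
          have k2r : κ ⟨u+1, hu2⟩ < 1 := (hbi _).mpr (by simp only [Fin.val_mk]; omega)
          have s1 : κ ⟨u, hu1⟩ ^ 2 - 1 < 0 := by
            nlinarith [mul_pos (by linarith : (0:ℝ) < 1 - κ ⟨u, hu1⟩)
              (by linarith : (0:ℝ) < 1 + κ ⟨u, hu1⟩)]
          have s2 : κ ⟨u+1, hu2⟩ ^ 2 - 1 < 0 := by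
            nlinarith [mul_pos (by linarith : (0:ℝ) < 1 - κ ⟨u+1, hu2⟩)
              (by linarith : (0:ℝ) < 1 + κ ⟨u+1, hu2⟩)]
          exact mul_pos_of_neg_of_neg s1 s2)
      have hTm2' : ∀ r ∈ Tm, P r = 0 ∧ |r| < 1 := by
        intro r hr
        obtain ⟨h1, h2, h3⟩ := hTm2 r hr
        exact ⟨h1, abs_lt.mpr ⟨by linarith, by linarith⟩⟩
      have hsub : Tm ∪ Dp ⊆ R.filter (fun s => ¬ 1 < |s|) := by
        intro s hs
        rcases Finset.mem_union.mp hs with h | h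
        · obtain ⟨h1, h2⟩ := hTm2' s h
          exact Finset.mem_filter.mpr ⟨hmemR s h1, by rw [not_lt]; linarith⟩
        · obtain ⟨h1, h2⟩ := hDp s h
          exact Finset.mem_filter.mpr ⟨hmemR s h1, by rw [not_lt, h2]⟩
      have hdisj : Disjoint Tm Dp := by
        rw [Finset.disjoint_left]
        intro s hs1 hs2
        have g1 := (hTm2' s hs1).2
        have g2 := (hDp s hs2).2
        rw [g2] at g1
        linarith
      have hcard : (Tm ∪ Dp).card = (β - 1) + δ := by
        rw [Finset.card_union_of_disjoint hdisj, hTm1, hDcard]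
      have h1 : (β - 1) + δ ≤ (R.filter (fun s => ¬ 1 < |s|)).card := by
        rw [← hcard]; exact Finset.card_le_card hsub
      rw [hqcard]
      omega
    · -- β = 0
      have hsub : Dp ⊆ R.filter (fun s => ¬ 1 < |s|) := by
        intro s hs
        obtain ⟨h1, h2⟩ := hDp s hs
        exact Finset.mem_filter.mpr ⟨hmemR s h1, by rw [not_lt, h2]⟩
      have h1 : δ ≤ (R.filter (fun s => ¬ 1 < |s|)).card := by
        rw [← hDcard]; exact Finset.card_le_card hsub
      rw [hqcard]
      omega
  -- lower bound
  have hlb : α + γ ≤ q + 1 := by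
    by_cases hα1 : 1 ≤ α
    · -- low chain
      obtain ⟨i0, hi0v⟩ : ∃ i : Fin p, i.val = 0 := ⟨⟨0, by omega⟩, rfl⟩
      obtain ⟨iA, hiAv⟩ : ∃ i : Fin p, i.val = α - 1 := ⟨⟨α - 1, by omega⟩, rfl⟩
      have hκiA : κ iA < -1 := (hαi iA).mpr (by rw [hiAv]; omega)
      have hκi0 : κ i0 < -1 := (hαi i0).mpr (by rw [hi0v]; omega)
      obtain ⟨Tl, hTl1, hTl2⟩ := aux_zone p κ m P hP hκ hm hcont 0 (α - 1)
        (by omega) i0 iA hi0v (by rw [hiAv]; omega)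
        (by
          intro u h1 h2 hu1 hu2
          have k1 : κ ⟨u, hu1⟩ < -1 := (hαi _).mpr (by simp only [Fin.val_mk]; omega)
          have k2 : κ ⟨u+1, hu2⟩ < -1 := (hαi _).mpr (by simp only [Fin.val_mk]; omega)
          have s1 : 0 < κ ⟨u, hu1⟩ ^ 2 - 1 := by nlinarith [sq_nonneg (κ ⟨u, hu1⟩ + 1)]
          have s2 : 0 < κ ⟨u+1, hu2⟩ ^ 2 - 1 := by nlinarith [sq_nonneg (κ ⟨u+1, hu2⟩ + 1)]
          exact mul_pos s1 s2)
      have hTl2' : ∀ r ∈ Tl, P r = 0 ∧ r < -1 ∧ κ i0 < r := by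
        intro r hr
        obtain ⟨h1, h2, h3⟩ := hTl2 r hr
        exact ⟨h1, by linarith, h2⟩
      by_cases hγ1 : 1 ≤ γ
      · -- high chain and extra root
        obtain ⟨icc, hiccv⟩ : ∃ i : Fin p, i.val = cc := ⟨⟨cc, by omega⟩, rfl⟩
        obtain ⟨ilast, hilastv⟩ : ∃ i : Fin p, i.val = p - 1 := ⟨⟨p - 1, by omega⟩, rfl⟩
        have hκicc : 1 < κ icc := by
          by_contra hc
          have := (hci icc).mp (by linarith)
          rw [hiccv] at this; omega
        have hκilast : 1 < κ ilast := by
          by_contra hc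
          have := (hci ilast).mp (by linarith)
          rw [hilastv] at this; omega
        obtain ⟨Th, hTh1, hTh2⟩ := aux_zone p κ m P hP hκ hm hcont cc (γ - 1)
          (by omega) icc ilast hiccv (by rw [hilastv]; omega)
          (by
            intro u h1 h2 hu1 hu2
            have k1 : 1 < κ ⟨u, hu1⟩ := by
              by_contra hc
              have := (hci ⟨u, hu1⟩).mp (by linarith)
              simp only [Fin.val_mk] at this; omega
            have k2 : 1 < κ ⟨u+1, hu2⟩ := by
              by_contra hc
              have := (hci ⟨u+1, hu2⟩).mp (by linarith)
              simp only [Fin.val_mk] at this; omega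
            have s1 : 0 < κ ⟨u, hu1⟩ ^ 2 - 1 := by nlinarith [sq_nonneg (κ ⟨u, hu1⟩ - 1)]
            have s2 : 0 < κ ⟨u+1, hu2⟩ ^ 2 - 1 := by nlinarith [sq_nonneg (κ ⟨u+1, hu2⟩ - 1)]
            exact mul_pos s1 s2)
        have hTh2' : ∀ r ∈ Th, P r = 0 ∧ 1 < r ∧ r < κ ilast := by
          intro r hr
          obtain ⟨h1, h2, h3⟩ := hTh2 r hr
          exact ⟨h1, by linarith, h3⟩
        obtain ⟨e, he0, he2⟩ := aux_extra p hp κ m hκ hm hH P hP i0 ilast hi0v hilastv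
          hκi0 hκilast
        have heabs : 1 < |e| := by
          rcases he2 with h | h
          · rw [abs_of_neg (by linarith)]; linarith
          · rw [abs_of_pos (by linarith)]; linarith
        have hdisj1 : Disjoint Tl Th := by
          rw [Finset.disjoint_left]
          intro s hs1 hs2
          have g1 := (hTl2' s hs1).2.1
          have g2 := (hTh2' s hs2).2.1
          linarith
        have henotin : e ∉ Tl ∪ Th := by
          intro hc
          rcases Finset.mem_union.mp hc with h | h
          · rcases he2 with h' | h'
            · have := (hTl2' e h).2.2; linarith
            · have g1 := (hTl2' e h).2.1; linarith
          · rcases he2 with h' | h'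
            · have := (hTh2' e h).2.1; linarith
            · have := (hTh2' e h).2.2; linarith
        have hsub : insert e (Tl ∪ Th) ⊆ R.filter (fun s => 1 < |s|) := by
          intro s hs
          rcases Finset.mem_insert.mp hs with rfl | hs'
          · exact Finset.mem_filter.mpr ⟨hmemR s he0, heabs⟩
          rcases Finset.mem_union.mp hs' with h | h
          · obtain ⟨h1, h2, _⟩ := hTl2' s h
            exact Finset.mem_filter.mpr ⟨hmemR s h1, by rw [abs_of_neg (by linarith)]; linarith⟩
          · obtain ⟨h1, h2, _⟩ := hTh2' s h
            exact Finset.mem_filter.mpr ⟨hmemR s h1, by rw [abs_of_pos (by linarith)]; linarith⟩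
        have hcard : (insert e (Tl ∪ Th)).card = (α - 1) + (γ - 1) + 1 := by
          rw [Finset.card_insert_of_notMem henotin,
            Finset.card_union_of_disjoint hdisj1, hTl1, hTh1]
        have hle := Finset.card_le_card hsub
        rw [hcard] at hle
        rw [hqcard]
        omega
      · -- γ = 0
        have hsub : Tl ⊆ R.filter (fun s => 1 < |s|) := by
          intro s hs
          obtain ⟨h1, h2, _⟩ := hTl2' s hs
          exact Finset.mem_filter.mpr ⟨hmemR s h1, by rw [abs_of_neg (by linarith)]; linarith⟩
        have hle := Finset.card_le_card hsub
        rw [hTl1] at hle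
        rw [hqcard]
        omega
    · by_cases hγ1 : 1 ≤ γ
      · -- only high chain
        obtain ⟨icc, hiccv⟩ : ∃ i : Fin p, i.val = cc := ⟨⟨cc, by omega⟩, rfl⟩
        obtain ⟨ilast, hilastv⟩ : ∃ i : Fin p, i.val = p - 1 := ⟨⟨p - 1, by omega⟩, rfl⟩
        have hκicc : 1 < κ icc := by
          by_contra hc
          have := (hci icc).mp (by linarith)
          rw [hiccv] at this; omega
        obtain ⟨Th, hTh1, hTh2⟩ := aux_zone p κ m P hP hκ hm hcont cc (γ - 1)
          (by omega) icc ilast hiccv (by rw [hilastv]; omega)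
          (by
            intro u h1 h2 hu1 hu2
            have k1 : 1 < κ ⟨u, hu1⟩ := by
              by_contra hc
              have := (hci ⟨u, hu1⟩).mp (by linarith)
              simp only [Fin.val_mk] at this; omega
            have k2 : 1 < κ ⟨u+1, hu2⟩ := by
              by_contra hc
              have := (hci ⟨u+1, hu2⟩).mp (by linarith)
              simp only [Fin.val_mk] at this; omega
            have s1 : 0 < κ ⟨u, hu1⟩ ^ 2 - 1 := by nlinarith [sq_nonneg (κ ⟨u, hu1⟩ - 1)]
            have s2 : 0 < κ ⟨u+1, hu2⟩ ^ 2 - 1 := by nlinarith [sq_nonneg (κ ⟨u+1, hu2⟩ - 1)]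
            exact mul_pos s1 s2)
        have hsub : Th ⊆ R.filter (fun s => 1 < |s|) := by
          intro s hs
          obtain ⟨h1, h2, _⟩ := hTh2 s hs
          exact Finset.mem_filter.mpr ⟨hmemR s h1, by rw [abs_of_pos (by linarith)]; linarith⟩
        have hle := Finset.card_le_card hsub
        rw [hTh1] at hle
        rw [hqcard]
        omega
      · omega
  refine ⟨by omega, by omega, by omega⟩
end
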